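/- Let q ∈ (1,∞) and κ ≥ 0. There is a constant c ≥ 1 depending only on q such that for all P, Q, R ∈ ℝ^{N×n} (with Frobenius norm |·|): ρ'_{|P|}(|Q − P|) ≤ c ρ'_{|R|}(|Q − R|) + c ρ'_{|R|}(|P − R|), where ρ'_a(t) = (κ + a + t)^{q−2} t. -/

import Mathlib

/-!
Put `s = max |Q − R| |P − R|`. The triangle inequality gives `|Q − P| ≤ 2s` and
`||P| − |R|| ≤ s`. Since `t ↦ ρ'_a(t)` is nondecreasing for `q ≥ 1`, and the bases
`κ + |P| + 2s` and `κ + |R| + s` agree up to a factor `3`, we get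
`ρ'_{|P|}(|Q − P|) ≤ ρ'_{|P|}(2s) ≤ 2 · 3^{|q−2|} ρ'_{|R|}(s)`; finally `ρ'_{|R|}(s)` is one of
the two (nonnegative) terms on the right-hand side.
-/

/-- The derivative of the shifted `N`-function: `ρ'_a(t) = (κ+a+t)^{q−2} t`. -/
noncomputable def rhoShiftDeriv (κ q a t : ℝ) : ℝ := (κ + a + t) ^ (q - 2) * t

lemma rpow_le_rpow_abs_mul_rpow {x y c p : ℝ} (hx : 0 ≤ x) (hxy : x ≤ y) (hyx : y ≤ c * x)
    (hc : 1 ≤ c) : y ^ p ≤ c ^ |p| * x ^ p := by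
  rcases hx.eq_or_lt with rfl | hx
  · obtain rfl : y = 0 := le_antisymm (by simpa using hyx) hxy
    exact le_mul_of_one_le_left (Real.rpow_nonneg le_rfl _) (Real.one_le_rpow hc (abs_nonneg p))
  rcases le_or_gt 0 p with hp | hp
  · calc y ^ p ≤ (c * x) ^ p := Real.rpow_le_rpow (hx.le.trans hxy) hyx hp
      _ = c ^ |p| * x ^ p := by
        rw [Real.mul_rpow (by linarith) hx.le, abs_of_nonneg hp]
  · calc y ^ p ≤ x ^ p := Real.rpow_le_rpow_of_nonpos hx hxy hp.le
      _ ≤ c ^ |p| * x ^ p :=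
        le_mul_of_one_le_left (Real.rpow_nonneg hx.le _) (Real.one_le_rpow hc (abs_nonneg p))

section RhoShiftDeriv

variable {κ q a t : ℝ}

lemma rhoShiftDeriv_nonneg (hκa : 0 ≤ κ + a) (ht : 0 ≤ t) : 0 ≤ rhoShiftDeriv κ q a t :=
  mul_nonneg (Real.rpow_nonneg (by linarith) _) ht

lemma rhoShiftDeriv_eq_rpow_mul_div (hκa : 0 ≤ κ + a) (ht : 0 ≤ t) :
    rhoShiftDeriv κ q a t = (κ + a + t) ^ (q - 1) * (t / (κ + a + t)) := by
  rcases (add_nonneg hκa ht).eq_or_lt with h0 | hpos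
  · obtain rfl : t = 0 := by linarith
    simp [rhoShiftDeriv]
  · rw [rhoShiftDeriv, show q - 1 = q - 2 + 1 by ring, Real.rpow_add_one hpos.ne']
    field_simp

lemma div_add_le_div_add {C t₁ t₂ : ℝ} (hC : 0 ≤ C) (ht₁ : 0 ≤ t₁) (h : t₁ ≤ t₂) :
    t₁ / (C + t₁) ≤ t₂ / (C + t₂) := by
  rcases ht₁.eq_or_lt with rfl | ht₁
  · simpa using div_nonneg (ht₁.trans h) (by linarith)
  · rw [div_le_div_iff₀ (by linarith) (by linarith)]
    nlinarith

lemma rhoShiftDeriv_le_rhoShiftDeriv (hq : 1 ≤ q) (hκa : 0 ≤ κ + a) {t₁ t₂ : ℝ}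
    (ht₁ : 0 ≤ t₁) (h : t₁ ≤ t₂) : rhoShiftDeriv κ q a t₁ ≤ rhoShiftDeriv κ q a t₂ := by
  rw [rhoShiftDeriv_eq_rpow_mul_div hκa ht₁, rhoShiftDeriv_eq_rpow_mul_div hκa (ht₁.trans h)]
  exact mul_le_mul
    (Real.rpow_le_rpow (by linarith) (by linarith) (by linarith))
    (div_add_le_div_add hκa ht₁ h)
    (div_nonneg ht₁ (by linarith)) (Real.rpow_nonneg (by linarith) _)

lemma rhoShiftDeriv_change_shift (hq : 1 ≤ q) (hκ : 0 ≤ κ) {b s : ℝ} (ha : 0 ≤ a) (hb : 0 ≤ b)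
    (ht : 0 ≤ t) (hab : |a - b| ≤ s) (hts : t ≤ 2 * s) :
    rhoShiftDeriv κ q a t ≤ 2 * 3 ^ |q - 2| * rhoShiftDeriv κ q b s := by
  obtain ⟨hab₁, hab₂⟩ := abs_le.mp hab
  have hbase : (κ + a + 2 * s) ^ (q - 2) ≤ 3 ^ |q - 2| * (κ + b + s) ^ (q - 2) :=
    rpow_le_rpow_abs_mul_rpow (by linarith) (by linarith) (by linarith) (by norm_num)
  calc rhoShiftDeriv κ q a t ≤ rhoShiftDeriv κ q a (2 * s) :=
        rhoShiftDeriv_le_rhoShiftDeriv hq (by linarith) ht hts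
    _ ≤ 3 ^ |q - 2| * (κ + b + s) ^ (q - 2) * (2 * s) :=
        mul_le_mul_of_nonneg_right hbase (by linarith)
    _ = 2 * 3 ^ |q - 2| * rhoShiftDeriv κ q b s := by rw [rhoShiftDeriv]; ring

lemma rhoShiftDeriv_max_le_add (hκa : 0 ≤ κ + a) {y z : ℝ} (hy : 0 ≤ y) (hz : 0 ≤ z) :
    rhoShiftDeriv κ q a (max y z) ≤ rhoShiftDeriv κ q a y + rhoShiftDeriv κ q a z := by
  have := rhoShiftDeriv_nonneg (q := q) hκa hy
  have := rhoShiftDeriv_nonneg (q := q) hκa hz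
  rcases max_choice y z with h | h <;> rw [h] <;> linarith

end RhoShiftDeriv

/-- (Change of shift, Lemma `lem:shift_ch` (b), for constant exponent `q`.)
Let `q ∈ (1,∞)` and `κ ≥ 0`. There is `c ≥ 1` depending only on `q` such that for all
matrices `P, Q, R`:
`ρ'_{|P|}(|Q−P|) ≤ c ρ'_{|R|}(|Q−R|) + c ρ'_{|R|}(|P−R|)`. -/
theorem stmt15 (N n : ℕ) (q : ℝ) (hq : 1 < q) :
    ∃ c : ℝ, 1 ≤ c ∧ ∀ κ : ℝ, 0 ≤ κ →
      ∀ P Q R : EuclideanSpace ℝ (Fin N × Fin n),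
        rhoShiftDeriv κ q ‖P‖ ‖Q - P‖ ≤
          c * rhoShiftDeriv κ q ‖R‖ ‖Q - R‖ + c * rhoShiftDeriv κ q ‖R‖ ‖P - R‖ := by
  refine ⟨2 * 3 ^ |q - 2|, ?_, fun κ hκ P Q R => ?_⟩
  · nlinarith [Real.one_le_rpow (show (1 : ℝ) ≤ 3 by norm_num) (abs_nonneg (q - 2))]
  set s := max ‖Q - R‖ ‖P - R‖
  have hdist : ‖Q - P‖ ≤ 2 * s := by
    have := norm_sub_le_norm_sub_add_norm_sub Q R P
    rw [norm_sub_rev R P] at this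
    linarith [le_max_left ‖Q - R‖ ‖P - R‖, le_max_right ‖Q - R‖ ‖P - R‖]
  have hshift : |‖P‖ - ‖R‖| ≤ s := (abs_norm_sub_norm_le P R).trans (le_max_right _ _)
  calc rhoShiftDeriv κ q ‖P‖ ‖Q - P‖ ≤ 2 * 3 ^ |q - 2| * rhoShiftDeriv κ q ‖R‖ s :=
        rhoShiftDeriv_change_shift hq.le hκ (norm_nonneg _) (norm_nonneg _) (norm_nonneg _)
          hshift hdist
    _ ≤ 2 * 3 ^ |q - 2| * (rhoShiftDeriv κ q ‖R‖ ‖Q - R‖ + rhoShiftDeriv κ q ‖R‖ ‖P - R‖) :=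
        mul_le_mul_of_nonneg_left
          (rhoShiftDeriv_max_le_add (by positivity) (norm_nonneg _) (norm_nonneg _))
          (by positivity)
    _ = _ := mul_add _ _ _
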